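/- The Randomized Egalitarian Welfare mechanism is strategyproof in expectation: for every n ≥ 1, every profile x ∈ [0,1]^n, every agent i, and every misreport x_i' ∈ [0,1], E(x, x_i) ≥ E((x_i', x_{−i}), x_i), where E(x', p) denotes the expected distance of the point p from the facility when the reported profile is x': E(x', p) = 1 − p if all reported locations lie in [0, 1/2]; E(x', p) = p if all reported locations lie in (1/2, 1]; and E(x', p) = 1/2 otherwise. -/
import Mathlib


open Classical in
/-- Expected distance of the point `p` from the facility under the Randomized
Egalitarian Welfare mechanism, given the reported profile `x'`. -/
noncomputable def randEgalExpDist (n : ℕ) (x' : Fin n → ℝ) (p : ℝ) : ℝ :=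
  if ∀ i, x' i ≤ 1/2 then 1 - p
  else if ∀ i, 1/2 < x' i then p
  else 1/2

/-- The Randomized Egalitarian Welfare mechanism is strategyproof in expectation. -/
theorem randomized_egalitarian_strategyproof (n : ℕ) (hn : 1 ≤ n)
    (x : Fin n → ℝ) (hx : ∀ i, x i ∈ Set.Icc (0:ℝ) 1)
    (i : Fin n) (x' : ℝ) (hx' : x' ∈ Set.Icc (0:ℝ) 1) :
    randEgalExpDist n (Function.update x i x') (x i) ≤ randEgalExpDist n x (x i) := by
  obtain ⟨hp0, hp1⟩ := hx i
  unfold randEgalExpDist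
  by_cases hA : ∀ j, x j ≤ 1/2
  · -- old: all ≤ 1/2, value 1 - x i ≥ 1/2
    have hp2 : x i ≤ 1/2 := hA i
    rw [if_pos hA]
    split_ifs with g1 g2 <;> linarith
  · by_cases hB : ∀ j, 1/2 < x j
    · have hp2 : 1/2 < x i := hB i
      rw [if_neg hA, if_pos hB]
      split_ifs with g1 g2 <;> linarith
    · rw [if_neg hA, if_neg hB]
      split_ifs with g1 g2
      · -- new all ≤ 1/2: then x j ≤ 1/2 for all j ≠ i, so the witness of ¬hA is i
        push_neg at hA
        obtain ⟨j, hj⟩ := hA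
        have hji : j = i := by
          by_contra hji
          have := g1 j
          rw [Function.update_of_ne hji] at this
          linarith
        subst hji
        linarith
      · -- new all > 1/2: witness of ¬hB is i
        push_neg at hB
        obtain ⟨j, hj⟩ := hB
        have hji : j = i := by
          by_contra hji
          have := g2 j
          rw [Function.update_of_ne hji] at this
          linarith
        subst hji
        linarith
      · linarith
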